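/- Let k be a field, V a nonzero k-vector space, R a unital k-subalgebra of End_k(V), and I a two-sided ideal of R that is topologically nilpotent as a set. Suppose there is a family {E_α : α ∈ Ω} of elements of R such that (a) E_αE_α − E_α ∈ I for all α ∈ Ω and E_αE_β ∈ I whenever α ≠ β, and (b) for every T ∈ R and v ∈ V there exist finitely many α₁, …, αₙ ∈ Ω, scalars a₁, …, aₙ ∈ k, and S ∈ I with T(v) = Σᵢ aᵢ E_{αᵢ}(v) + S(v). Then R is triangularizable. -/

import Mathlib

universe u v w

variable {k : Type u} [Field k]

/-- `seqProd f n = f (n-1) * ⋯ * f 1 * f 0`, the composition `Tₙ ⋯ T₂ T₁` of the first `n`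
terms of the sequence `f` (and the identity for `n = 0`). -/
def seqProd {V : Type v} [AddCommGroup V] [Module k V]
    (f : ℕ → Module.End k V) : ℕ → Module.End k V
  | 0 => 1
  | n + 1 => f n * seqProd f n

/-- A subset `X ⊆ End_k(V)` is topologically nilpotent if for every sequence of elements of
`X` and every finite-dimensional subspace `W` of `V`, some initial composition
`Tₙ ⋯ T₂ T₁` annihilates `W`. -/
def IsTopNilpotentSet {V : Type v} [AddCommGroup V] [Module k V]
    (X : Set (Module.End k V)) : Prop :=
  ∀ f : ℕ → Module.End k V, (∀ n, f n ∈ X) →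
    ∀ W : Submodule k V, FiniteDimensional k ↥W →
      ∃ n : ℕ, 0 < n ∧ ∀ w ∈ W, seqProd f n w = 0

/-!
Given a proper subspace `U`, topological nilpotence of `I` yields `w ∉ U` with `I w ⊆ U`: otherwise
some element of `I` moves any vector outside `U` to another one outside `U`, and iterating from
`v₀ ∉ U` gives a sequence in `I` whose compositions never kill `v₀`. Writing
`w = 1 w = Σ aᵢ E_{αᵢ} w + S w` shows that `u := E_α w ∉ U` for some `α`. As `E_β E_α ∈ I` for
`β ≠ α` and `E_α E_α ≡ E_α` modulo `I`, each `E_β` maps `u` into `U + k u`, hence so does every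
`T ∈ R`. Choosing such vectors by transfinite recursion over the span of those chosen before
exhausts `V` and yields a well-ordered basis in which `R` is triangular.
-/

open Set Submodule Cardinal

section LinearIndependence

variable {ι M : Type*} [LinearOrder ι] [AddCommGroup M] [Module k M]

theorem linearIndepOn_of_notMem_span_image_Iio {f : ι → M} {s : Set ι}
    (hf : ∀ i ∈ s, f i ∉ span k (f '' (s ∩ Iio i))) : LinearIndepOn k f s := by
  classical
  refine linearIndepOn_of_finite s fun t hts ht => ?_
  lift t to Finset ι using ht
  induction t using Finset.induction_on_max with
  | empty => simp
  | insert i t hlt ih =>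
    have hti : (t : Set ι) ⊆ s := fun j hj => hts (by simp [hj])
    have hi : i ∉ (t : Set ι) := fun hi => (hlt i hi).false
    rw [Finset.coe_insert, linearIndepOn_insert hi]
    refine ⟨ih hti, fun hmem => hf i (hts (by simp)) (span_mono ?_ hmem)⟩
    exact image_mono fun j hj => ⟨hti hj, hlt j hj⟩

end LinearIndependence

section Triangularization

variable {V : Type v} [AddCommGroup V] [Module k V]

theorem exists_basis_apply_eq_next_span_image_Iio {ι : Type v} [LinearOrder ι] [WellFoundedLT ι]
    (hι : #V < #ι) (next : Submodule k V → V) (hnext : ∀ U, U ≠ ⊤ → next U ∉ U) :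
    ∃ (i₀ : ι) (b : Module.Basis (Iio i₀) k V), ∀ i, b i = next (span k (b '' Iio i)) := by
  obtain ⟨f, hf⟩ : ∃ f : ι → V, ∀ i, f i = next (span k (f '' Iio i)) :=
    ⟨wellFounded_lt.fix fun i g => next (span k (range fun j : Iio i => g j j.2)),
      fun i => by rw [WellFounded.fix_eq, image_eq_range]⟩
  have hindep : ∀ s : Set ι, (∀ i ∈ s, span k (f '' Iio i) ≠ ⊤) → LinearIndepOn k f s := by
    refine fun s hs => linearIndepOn_of_notMem_span_image_Iio fun i hi hmem => ?_
    have := hnext _ (hs i hi)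
    rw [← hf i] at this
    exact this (span_mono (image_mono inter_subset_right) hmem)
  have hex : ∃ i, span k (f '' Iio i) = ⊤ := by
    by_contra! h
    have hinj := (linearIndepOn_univ_iff.mp (hindep univ fun i _ => h i)).injective
    exact hι.not_ge (mk_le_of_injective hinj)
  obtain ⟨i₀, hi₀, hmin⟩ := wellFounded_lt.has_min _ hex
  have hli : LinearIndependent k fun i : Iio i₀ => f i :=
    hindep _ fun i hi htop => hmin i htop hi
  have hspan : ⊤ ≤ span k (range fun i : Iio i₀ => f i) := by
    rw [← image_eq_range, hi₀]
  refine ⟨i₀, Module.Basis.mk hli hspan, fun i => ?_⟩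
  rw [Module.Basis.coe_mk, hf, ← image_subtype_val_Iio_Iio, image_image]

theorem exists_wellOrder_basis_triangular {X : Set (Module.End k V)}
    (h : ∀ U : Submodule k V, U ≠ ⊤ → ∃ u ∉ U, ∀ T ∈ X, T u ∈ U ⊔ span k {u}) :
    ∃ (ι : Type v) (lo : LinearOrder ι), WellFounded lo.lt ∧
      ∃ b : Module.Basis ι k V, ∀ T ∈ X, ∀ i : ι,
        T (b i) ∈ Submodule.span k (⇑b '' {j | lo.le j i}) := by
  choose! next hnext_notMem hnext_mem using h
  have hcard : #V < #(Order.succ #V).ord.ToType := by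
    rw [mk_ord_toType]
    exact Order.lt_succ #V
  obtain ⟨i₀, b, hb⟩ := exists_basis_apply_eq_next_span_image_Iio hcard next hnext_notMem
  refine ⟨Iio i₀, inferInstance, wellFounded_lt, b, fun T hT i => ?_⟩
  have hproper : span k (b '' Iio i) ≠ ⊤ := fun htop =>
    b.linearIndependent.notMem_span_image self_notMem_Iio (htop ▸ mem_top)
  have := hnext_mem _ hproper T hT
  rw [← hb] at this
  show T (b i) ∈ span k (b '' Iic i)
  rwa [← Iio_insert, image_insert_eq, span_insert, sup_comm]

theorem IsTopNilpotentSet.exists_notMem_forall_apply_mem {X : Set (Module.End k V)}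
    (hX : IsTopNilpotentSet X) {U : Submodule k V} (hU : U ≠ ⊤) :
    ∃ w ∉ U, ∀ T ∈ X, T w ∈ U := by
  obtain ⟨v₀, hv₀⟩ := SetLike.exists_not_mem_of_ne_top U hU
  by_contra! h
  choose F hFX hFU using h
  let w : ℕ → {x : V // x ∉ U} := fun n =>
    Nat.rec ⟨v₀, hv₀⟩ (fun _ p => ⟨F p.1 p.2 p.1, hFU p.1 p.2⟩) n
  let f : ℕ → Module.End k V := fun n => F (w n).1 (w n).2
  have hseq : ∀ n, seqProd f n v₀ = (w n).1 := by
    intro n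
    induction n with
    | zero => rfl
    | succ n ih => exact congrArg (f n) ih
  obtain ⟨n, -, hzero⟩ := hX f (fun n => hFX _ _) (span k {v₀}) inferInstance
  have := (w n).2
  rw [← hseq, hzero v₀ (mem_span_singleton_self v₀)] at this
  exact this U.zero_mem

section OrthogonalIdempotentsModIdeal

variable {R : Subalgebra k (Module.End k V)} {I : TwoSidedIdeal R} {Ω : Type w} {E : Ω → R} {U : Submodule k V} {w : V}

theorem exists_apply_notMem_of_forall_ideal_apply_mem
    (hb : ∀ (T : R) (v : V), ∃ (m : ℕ) (α : Fin m → Ω) (a : Fin m → k) (S : R),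
      S ∈ I ∧ (T : Module.End k V) v =
        (∑ i : Fin m, a i • (E (α i) : Module.End k V) v) + (S : Module.End k V) v)
    (hw : w ∉ U) (hIw : ∀ S ∈ I, (S : Module.End k V) w ∈ U) :
    ∃ α, (E α : Module.End k V) w ∉ U := by
  by_contra! h
  obtain ⟨m, α, a, S, hS, hw_eq⟩ := hb 1 w
  rw [OneMemClass.coe_one, Module.End.one_apply] at hw_eq
  exact hw (hw_eq ▸ add_mem (sum_mem fun i _ => smul_mem _ _ (h (α i))) (hIw S hS))

theorem apply_mem_sup_span_of_forall_ideal_apply_mem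
    (ha1 : ∀ α : Ω, E α * E α - E α ∈ I)
    (ha2 : ∀ α β : Ω, α ≠ β → E α * E β ∈ I)
    (hb : ∀ (T : R) (v : V), ∃ (m : ℕ) (α : Fin m → Ω) (a : Fin m → k) (S : R),
      S ∈ I ∧ (T : Module.End k V) v =
        (∑ i : Fin m, a i • (E (α i) : Module.End k V) v) + (S : Module.End k V) v)
    (hIw : ∀ S ∈ I, (S : Module.End k V) w ∈ U) (α : Ω) {T : Module.End k V} (hT : T ∈ R) :
    T ((E α : Module.End k V) w) ∈ U ⊔ span k {(E α : Module.End k V) w} := by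
  set u := (E α : Module.End k V) w
  have hmul : ∀ S : R, (S : Module.End k V) u = ((S * E α : R) : Module.End k V) w :=
    fun _ => rfl
  have hIu : ∀ S ∈ I, (S : Module.End k V) u ∈ U := fun S hS =>
    hmul S ▸ hIw _ (I.mul_mem_right _ _ hS)
  have hEu : ∀ β, (E β : Module.End k V) u ∈ U ⊔ span k {u} := by
    intro β
    rcases eq_or_ne β α with rfl | hne
    · have hidem : (E β : Module.End k V) u
          = ((E β * E β - E β : R) : Module.End k V) w + u := by
        rw [hmul, Subalgebra.coe_sub, LinearMap.sub_apply, sub_add_cancel]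
      rw [hidem]
      exact add_mem (mem_sup_left (hIw _ (ha1 β))) (mem_sup_right (mem_span_singleton_self u))
    · exact mem_sup_left (hmul _ ▸ hIw _ (ha2 β α hne))
  obtain ⟨m, β, a, S, hS, hTu⟩ := hb ⟨T, hT⟩ u
  change T u = _ at hTu
  rw [hTu]
  exact add_mem (sum_mem fun i _ => smul_mem _ _ (hEu (β i))) (mem_sup_left (hIu S hS))

end OrthogonalIdempotentsModIdeal

end Triangularization

theorem stmt_13_general {V : Type v} [AddCommGroup V] [Module k V]
    (R : Subalgebra k (Module.End k V)) (I : TwoSidedIdeal R)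
    (hI : IsTopNilpotentSet
      {T : Module.End k V | ∃ S : R, S ∈ I ∧ (S : Module.End k V) = T})
    {Ω : Type w} (E : Ω → R)
    (ha1 : ∀ α : Ω, E α * E α - E α ∈ I)
    (ha2 : ∀ α β : Ω, α ≠ β → E α * E β ∈ I)
    (hb : ∀ (T : R) (v : V), ∃ (m : ℕ) (α : Fin m → Ω) (a : Fin m → k) (S : R),
      S ∈ I ∧ (T : Module.End k V) v =
        (∑ i : Fin m, a i • (E (α i) : Module.End k V) v) + (S : Module.End k V) v) :
    ∃ (ι : Type v) (lo : LinearOrder ι), WellFounded lo.lt ∧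
      ∃ b : Module.Basis ι k V, ∀ T ∈ (R : Set (Module.End k V)), ∀ i : ι,
        T (b i) ∈ Submodule.span k (⇑b '' {j | lo.le j i}) := by
  refine exists_wellOrder_basis_triangular fun U hU => ?_
  obtain ⟨w, hwU, hIw⟩ := hI.exists_notMem_forall_apply_mem hU
  have hIw' : ∀ S ∈ I, (S : Module.End k V) w ∈ U := fun S hS => hIw _ ⟨S, hS, rfl⟩
  obtain ⟨α, hα⟩ := exists_apply_notMem_of_forall_ideal_apply_mem hb hwU hIw'
  exact ⟨_, hα, fun T hT => apply_mem_sup_span_of_forall_ideal_apply_mem ha1 ha2 hb hIw' α hT⟩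

/-- a unital `k`-subalgebra `R` of `End_k(V)` having a topologically
nilpotent two-sided ideal `I` and a family of elements that are orthogonal idempotents
modulo `I` and, together with `I`, span `R` pointwise, is triangularizable. -/
theorem stmt_13 {V : Type v} [AddCommGroup V] [Module k V] [Nontrivial V]
    (R : Subalgebra k (Module.End k V)) (I : TwoSidedIdeal R)
    (hI : IsTopNilpotentSet
      {T : Module.End k V | ∃ S : R, S ∈ I ∧ (S : Module.End k V) = T})
    {Ω : Type w} (E : Ω → R)
    (ha1 : ∀ α : Ω, E α * E α - E α ∈ I)
    (ha2 : ∀ α β : Ω, α ≠ β → E α * E β ∈ I)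
    (hb : ∀ (T : R) (v : V), ∃ (m : ℕ) (α : Fin m → Ω) (a : Fin m → k) (S : R),
      S ∈ I ∧ (T : Module.End k V) v =
        (∑ i : Fin m, a i • (E (α i) : Module.End k V) v) + (S : Module.End k V) v) :
    ∃ (ι : Type v) (lo : LinearOrder ι), WellFounded lo.lt ∧
      ∃ b : Module.Basis ι k V, ∀ T ∈ (R : Set (Module.End k V)), ∀ i : ι,
        T (b i) ∈ Submodule.span k (⇑b '' {j | lo.le j i}) :=
  stmt_13_general R I hI E ha1 ha2 hb
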